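/- arXiv:1604.02269 — 3 statements merged into one kernel-verified Lean document; each statement's English description precedes it below -/
import Mathlib

section
/- Let z : ℕ → ℝ be a real sequence (a discrete path). Then for all natural numbers s ≤ t, the sum over i from s to t-1 of (z(i+1) - z(i)) · 1_{z(i) ≥ 0} is at most z(t)⁺ - z(s)⁺, where x⁺ = max(x,0). -/
theorem sub_mul_ite_nonneg_le_max_sub {α : Type*} [Ring α] [LinearOrder α]
    [IsStrictOrderedRing α] (a b : α) :
    (b - a) * (if 0 ≤ a then 1 else 0) ≤ max b 0 - max a 0 := by
  by_cases ha : 0 ≤ a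
  · rw [if_pos ha, mul_one, max_eq_left ha]
    exact sub_le_sub_right (le_max_left b 0) a
  · rw [if_neg ha, mul_zero, max_eq_right (le_of_not_ge ha), sub_zero]
    exact le_max_right b 0

/-- Discrete pathwise inequality: the gains of holding one unit while the path is
nonnegative are bounded by the change in the positive part of the path. -/
theorem discrete_pathwise_inequality (z : ℕ → ℝ) (s t : ℕ) (hst : s ≤ t) :
    ∑ i ∈ Finset.Ico s t, (z (i + 1) - z i) * (if 0 ≤ z i then 1 else 0)
      ≤ max (z t) 0 - max (z s) 0 :=
  calc ∑ i ∈ Finset.Ico s t, (z (i + 1) - z i) * (if 0 ≤ z i then 1 else 0)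
      ≤ ∑ i ∈ Finset.Ico s t, (max (z (i + 1)) 0 - max (z i) 0) :=
        Finset.sum_le_sum fun i _ => sub_mul_ite_nonneg_le_max_sub (z i) (z (i + 1))
    _ = max (z t) 0 - max (z s) 0 := Finset.sum_Ico_sub (fun i => max (z i) 0) hst
end

section
/- With the notation of the discrete Breeden–Litzenberger construction (strikes 0 = x₀ < x₁ < ... < x_J, call prices c_j satisfying the no-arbitrage conditions, and probabilities p_j defined by second differences), additionally assume c_J = 0. Then for every 0 ≤ i ≤ J, ∑_{j=0}^{J} p_j · (x_j - x_i)⁺ = c_i. In particular ∑_{j=0}^{J} p_j x_j = s₀. -/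
/-!
Write `F i = ∑ⱼ p_j (x_j - x_i)⁺`. Moving the strike from `x_i` to `x_{i+1}` lowers every
payoff with `j > i` by `x_{i+1} - x_i` and leaves the others at zero, so
`F i - F (i+1) = (x_{i+1} - x_i) ∑_{j > i} p_j`. Since the `p_j` are second differences of the
call prices, the tail sum telescopes to the slope `(c_i - c_{i+1}) / (x_{i+1} - x_i)`, hence
`F` and `c` have the same first differences; both vanish at `J`, so they agree on `[0, J]`.
Taking `i = 0` (where `x_0 = 0`) gives the mean.
-/

open Finset

lemma eq_of_sub_succ_eq {M : Type*} [AddCommGroup M] {F c : ℕ → M} {J : ℕ}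
    (hJ : F J = c J) (hsucc : ∀ i < J, F i - F (i + 1) = c i - c (i + 1)) {i : ℕ}
    (hi : i ≤ J) : F i = c i := by
  have htel : F J - F i = c J - c i := by
    rw [← sum_Ico_sub F hi, ← sum_Ico_sub c hi]
    refine sum_congr rfl fun k hk => ?_
    rw [← neg_sub, hsucc k (mem_Ico.1 hk).2, neg_sub]
  rw [hJ] at htel
  exact sub_right_injective htel

lemma sum_Ioc_eq_of_eq_sub_succ {M : Type*} [AddCommGroup M] {p d : ℕ → M} {i J : ℕ}
    (hi : i < J) (hp : ∀ j, i < j → j < J → p j = d j - d (j + 1)) (hpJ : p J = d J) :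
    ∑ j ∈ Ioc i J, p j = d (i + 1) := by
  have htel : ∑ j ∈ Ico (i + 1) J, p j = d (i + 1) - d J := by
    rw [← neg_sub, ← sum_Ico_sub d hi, ← sum_neg_distrib]
    refine sum_congr rfl fun j hj => ?_
    rw [mem_Ico] at hj
    rw [hp j (by omega) hj.2, neg_sub]
  rw [← Ico_add_one_add_one_eq_Ioc, sum_Ico_succ_top (a := i + 1) hi, htel, hpJ, sub_add_cancel]

section CallPayoff

variable {J : ℕ} {x : ℕ → ℝ}

lemma max_sub_sub_max_sub_succ (hx : MonotoneOn x (Set.Iic J)) {i j : ℕ} (hi : i < J)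
    (hj : j ≤ J) :
    max (x j - x i) 0 - max (x j - x (i + 1)) 0 = if i < j then x (i + 1) - x i else 0 := by
  have hmono : ∀ {a b : ℕ}, a ≤ b → b ≤ J → x a ≤ x b := fun hab hb =>
    hx (Set.mem_Iic.2 (hab.trans hb)) (Set.mem_Iic.2 hb) hab
  have hstep : x i ≤ x (i + 1) := hmono (Nat.le_succ i) hi
  split_ifs with hij
  · have hle : x (i + 1) ≤ x j := hmono hij hj
    rw [max_eq_left (by linarith), max_eq_left (by linarith)]
    ring
  · have hle : x j ≤ x i := hmono (not_lt.1 hij) hi.le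
    rw [max_eq_right (by linarith), max_eq_right (by linarith), sub_zero]

lemma sum_mul_max_sub_sub_succ (hx : MonotoneOn x (Set.Iic J)) (p : ℕ → ℝ) {i : ℕ}
    (hi : i < J) :
    ∑ j ∈ range (J + 1), p j * max (x j - x i) 0
        - ∑ j ∈ range (J + 1), p j * max (x j - x (i + 1)) 0
      = (x (i + 1) - x i) * ∑ j ∈ Ioc i J, p j := by
  have hIoc : Ioc i J = {j ∈ range (J + 1) | i < j} := by
    ext j
    simp only [mem_Ioc, mem_filter, mem_range]
    omega
  rw [← sum_sub_distrib, mul_sum, hIoc, sum_filter]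
  refine sum_congr rfl fun j hj => ?_
  rw [← mul_sub, max_sub_sub_max_sub_succ hx hi (Nat.lt_succ_iff.1 (mem_range.1 hj))]
  split_ifs <;> ring

lemma sum_mul_max_sub_top (hx : MonotoneOn x (Set.Iic J)) (p : ℕ → ℝ) :
    ∑ j ∈ range (J + 1), p j * max (x j - x J) 0 = 0 := by
  refine sum_eq_zero fun j hj => ?_
  have hle : x j ≤ x J :=
    hx (Set.mem_Iic.2 (Nat.lt_succ_iff.1 (mem_range.1 hj))) Set.self_mem_Iic
      (Nat.lt_succ_iff.1 (mem_range.1 hj))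
  rw [max_eq_right (by linarith), mul_zero]

end CallPayoff

theorem breeden_litzenberger_recovers_calls_general (J : ℕ) (x c p : ℕ → ℝ) (s₀ : ℝ)
    (hx0 : x 0 = 0) (hxmono : ∀ j, j < J → x j < x (j + 1))
    (hc0 : c 0 = s₀)
    (hcJ : c J = 0)
    (hpj : ∀ j, 1 ≤ j → j < J →
      p j = (c (j - 1) - c j) / (x j - x (j - 1)) - (c j - c (j + 1)) / (x (j + 1) - x j))
    (hpJ : p J = (c (J - 1) - c J) / (x J - x (J - 1))) :
    (∀ i, i ≤ J → ∑ j ∈ Finset.range (J + 1), p j * max (x j - x i) 0 = c i) ∧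
      ∑ j ∈ Finset.range (J + 1), p j * x j = s₀ := by
  have hx : MonotoneOn x (Set.Iic J) := (strictMonoOn_Iic_of_lt_succ hxmono).monotoneOn
  let slope : ℕ → ℝ := fun j => (c (j - 1) - c j) / (x j - x (j - 1))
  have hcalls : ∀ i, i ≤ J → ∑ j ∈ range (J + 1), p j * max (x j - x i) 0 = c i := by
    refine fun i => eq_of_sub_succ_eq
      (F := fun k => ∑ j ∈ range (J + 1), p j * max (x j - x k) 0)
      ((sum_mul_max_sub_top hx p).trans hcJ.symm) fun i hi => ?_
    have htail : ∑ j ∈ Ioc i J, p j = slope (i + 1) :=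
      sum_Ioc_eq_of_eq_sub_succ hi (fun j hij hj => hpj j (by omega) hj) hpJ
    rw [sum_mul_max_sub_sub_succ hx p hi, htail]
    exact mul_div_cancel₀ _ (sub_ne_zero.2 (hxmono i hi).ne')
  refine ⟨hcalls, ?_⟩
  rw [← hc0, ← hcalls 0 J.zero_le]
  refine sum_congr rfl fun j hj => ?_
  have hxj : 0 ≤ x j := hx0 ▸ hx (Set.mem_Iic.2 J.zero_le)
    (Set.mem_Iic.2 (Nat.lt_succ_iff.1 (mem_range.1 hj))) j.zero_le
  rw [hx0, sub_zero, max_eq_left hxj]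

/-- The discrete Breeden–Litzenberger probabilities recover the observed call
prices: `∑ p_j (x_j - x_i)⁺ = c_i`, and in particular `∑ p_j x_j = s₀`. -/
theorem breeden_litzenberger_recovers_calls (J : ℕ) (hJ : 1 ≤ J) (x c p : ℕ → ℝ) (s₀ : ℝ)
    (hx0 : x 0 = 0) (hxmono : ∀ j, j < J → x j < x (j + 1))
    (hc0 : c 0 = s₀)
    (hcdec : ∀ j, j < J → c (j + 1) ≤ c j) (hcJ : c J = 0)
    (hslope1 : (c 0 - c 1) / (x 1 - x 0) ≤ 1)
    (hslopes : ∀ j, 1 ≤ j → j < J →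
      (c j - c (j + 1)) / (x (j + 1) - x j) ≤ (c (j - 1) - c j) / (x j - x (j - 1)))
    (hp0 : p 0 = 1 - (s₀ - c 1) / x 1)
    (hpj : ∀ j, 1 ≤ j → j < J →
      p j = (c (j - 1) - c j) / (x j - x (j - 1)) - (c j - c (j + 1)) / (x (j + 1) - x j))
    (hpJ : p J = (c (J - 1) - c J) / (x J - x (J - 1))) :
    (∀ i, i ≤ J → ∑ j ∈ Finset.range (J + 1), p j * max (x j - x i) 0 = c i) ∧
      ∑ j ∈ Finset.range (J + 1), p j * x j = s₀ :=
  breeden_litzenberger_recovers_calls_general J x c p s₀ hx0 hxmono hc0 hcJ hpj hpJ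
end

section
/- Let μ and ν be finitely supported probability measures on a finite set {y₁ < y₂ < ... < y_M} ⊂ ℝ with equal means, and suppose μ is dominated by ν in convex order (∫f dμ ≤ ∫f dν for every convex f: ℝ → ℝ). Then there exists a probability measure ρ on pairs {y₁,...,y_M} × {y₁,...,y_M} whose first marginal is μ, whose second marginal is ν, and which is a martingale coupling: for every j with μ({y_j}) > 0, ∑_k (y_k - y_j)·ρ({(y_j, y_k)}) = 0. -/
open Finset

/-!
Plans `ρ ≥ 0` with row sums `μ` form a compact convex set, hence so does its image under the
linear map `ρ ↦ (column sums, drifts ∑ₖ (yₖ - yⱼ) ρⱼₖ)`. If `(ν, 0)` were not in that image, a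
separating functional would give prices `β, γ` such that every plan pays
`∑ⱼₖ ρⱼₖ (βₖ + (yₖ - yⱼ) γⱼ) > ∑ₖ νₖ βₖ`. Moving each row of `ρ` onto a minimising column gives
`∑ⱼ μⱼ aⱼ > ∑ₖ νₖ βₖ` with `aⱼ = minₖ (βₖ + (yₖ - yⱼ) γⱼ)`. But the convex function
`g x = maxⱼ (aⱼ - (x - yⱼ) γⱼ)` satisfies `aⱼ ≤ g yⱼ` and `g yₖ ≤ βₖ`, so the convex order gives
`∑ⱼ μⱼ aⱼ ≤ ∑ₖ νₖ βₖ`.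
-/

theorem ConvexOn.finset_sup' {𝕜 E β ι : Type*} [Semiring 𝕜] [PartialOrder 𝕜]
    [AddCommMonoid E] [AddCommMonoid β] [LinearOrder β] [IsOrderedAddMonoid β] [SMul 𝕜 E]
    [Module 𝕜 β] [PosSMulStrictMono 𝕜 β] {s : Set E} {t : Finset ι} (H : t.Nonempty)
    {f : ι → E → β} (hf : ∀ i ∈ t, ConvexOn 𝕜 s (f i)) : ConvexOn 𝕜 s (t.sup' H f) :=
  t.sup'_induction H f (fun _ h₁ _ h₂ => h₁.sup h₂) hf

section MartingaleCoupling

variable {ι : Type*} [Fintype ι]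

def ConvexOrder (y μ ν : ι → ℝ) : Prop :=
  ∀ f : ℝ → ℝ, ConvexOn ℝ Set.univ f → ∑ j, μ j * f (y j) ≤ ∑ j, ν j * f (y j)

def fstMarginalPlans (μ : ι → ℝ) : Set (ι → ι → ℝ) :=
  {ρ | (∀ j k, 0 ≤ ρ j k) ∧ ∀ j, ∑ k, ρ j k = μ j}

def sndMarginalDrift (y : ι → ℝ) : (ι → ι → ℝ) →ₗ[ℝ] (ι → ℝ) × (ι → ℝ) where
  toFun ρ := (fun k => ∑ j, ρ j k, fun j => ∑ k, (y k - y j) * ρ j k)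
  map_add' ρ σ := by ext <;> simp [sum_add_distrib, mul_add]
  map_smul' c ρ := by ext <;> simp [mul_sum, mul_left_comm]

variable {y μ ν : ι → ℝ}

theorem convex_fstMarginalPlans (μ : ι → ℝ) : Convex ℝ (fstMarginalPlans μ) := by
  rintro ρ ⟨hρ₀, hρ⟩ σ ⟨hσ₀, hσ⟩ a b ha hb hab
  refine ⟨fun j k => ?_, fun j => ?_⟩
  · simp only [Pi.add_apply, Pi.smul_apply, smul_eq_mul]
    exact add_nonneg (mul_nonneg ha (hρ₀ j k)) (mul_nonneg hb (hσ₀ j k))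
  · simp only [Pi.add_apply, Pi.smul_apply, smul_eq_mul, sum_add_distrib, ← mul_sum, hρ, hσ]
    rw [← add_mul, hab, one_mul]

theorem isCompact_fstMarginalPlans (μ : ι → ℝ) : IsCompact (fstMarginalPlans μ) := by
  have hclosed : IsClosed (fstMarginalPlans μ) := by
    simp only [fstMarginalPlans, Set.ofPred_and, Set.ofPred_forall]
    exact (isClosed_iInter fun j => isClosed_iInter fun k =>
      isClosed_le continuous_const (by fun_prop)).inter
      (isClosed_iInter fun j => isClosed_eq (by fun_prop) continuous_const)
  refine (isCompact_Icc (a := 0) (b := fun j _ => μ j)).of_isClosed_subset hclosed ?_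
  rintro ρ ⟨hρ₀, hρ⟩
  exact ⟨fun j k => hρ₀ j k, fun j k =>
    (hρ j ▸ single_le_sum (fun k _ => hρ₀ j k) (mem_univ k) : ρ j k ≤ μ j)⟩

theorem apply_sndMarginalDrift [DecidableEq ι] {F : Type*} [FunLike F ((ι → ℝ) × (ι → ℝ)) ℝ]
    [LinearMapClass F ℝ ((ι → ℝ) × (ι → ℝ)) ℝ] (f : F) (ρ : ι → ι → ℝ) :
    f (sndMarginalDrift y ρ) = ∑ j, ∑ k, ρ j k *
      (f (Pi.single k 1, 0) + (y k - y j) * f (0, Pi.single j 1)) := by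
  have hdecomp : sndMarginalDrift y ρ =
      ∑ j, ∑ k, ρ j k • ((Pi.single k 1, 0) + (y k - y j) • (0, Pi.single j 1)) := by
    ext i <;>
      simp [sndMarginalDrift, Prod.fst_sum, Prod.snd_sum, Finset.sum_apply, Pi.single_apply,
        mul_comm]
  simp only [hdecomp, map_sum, map_smul, map_add, smul_eq_mul]

theorem ConvexOrder.sum_mul_le_of_le (h : ConvexOrder y μ ν) (hμ : ∀ j, 0 ≤ μ j)
    (hν : ∀ k, 0 ≤ ν k) {a β γ : ι → ℝ} (hle : ∀ j k, a j ≤ β k + (y k - y j) * γ j) :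
    ∑ j, μ j * a j ≤ ∑ k, ν k * β k := by
  obtain _ | _ := isEmpty_or_nonempty ι
  · simp
  set g : ℝ → ℝ := univ.sup' univ_nonempty fun j x => a j - (x - y j) * γ j
  have hg : ConvexOn ℝ Set.univ g := ConvexOn.finset_sup' _ fun j _ =>
    ⟨convex_univ, fun x _ x' _ s t _ _ hst => le_of_eq (by
      simp only [smul_eq_mul]; linear_combination (-(a j + y j * γ j)) * hst)⟩
  have hμg : ∀ j, a j ≤ g (y j) := fun j => by
    simp only [g, Finset.sup'_apply]
    exact le_sup'_of_le _ (mem_univ j) (by simp)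
  have hgν : ∀ k, g (y k) ≤ β k := fun k => by
    simp only [g, Finset.sup'_apply]
    exact sup'_le _ _ fun j _ => by linarith [hle j k]
  calc ∑ j, μ j * a j ≤ ∑ j, μ j * g (y j) :=
        sum_le_sum fun j _ => mul_le_mul_of_nonneg_left (hμg j) (hμ j)
    _ ≤ ∑ k, ν k * g (y k) := h g hg
    _ ≤ ∑ k, ν k * β k := sum_le_sum fun k _ => mul_le_mul_of_nonneg_left (hgν k) (hν k)

theorem ConvexOrder.exists_mem_fstMarginalPlans_pairing_le (h : ConvexOrder y μ ν)
    (hμ : ∀ j, 0 ≤ μ j) (hν : ∀ k, 0 ≤ ν k) (β γ : ι → ℝ) :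
    ∃ ρ ∈ fstMarginalPlans μ,
      ∑ j, ∑ k, ρ j k * (β k + (y k - y j) * γ j) ≤ ∑ k, ν k * β k := by
  classical
  set w : ι → ι → ℝ := fun j k => β k + (y k - y j) * γ j
  choose κ _ hκ using fun j => exists_min_image univ (w j) ⟨j, mem_univ j⟩
  refine ⟨fun j k => if k = κ j then μ j else 0,
    ⟨fun j k => ite_nonneg (hμ j) le_rfl, fun j => by simp⟩, ?_⟩
  calc ∑ j, ∑ k, (if k = κ j then μ j else 0) * w j k = ∑ j, μ j * w j (κ j) := by simp
    _ ≤ ∑ k, ν k * β k := h.sum_mul_le_of_le hμ hν fun j k => hκ j k (mem_univ k)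

theorem ConvexOrder.mem_image_sndMarginalDrift (h : ConvexOrder y μ ν) (hμ : ∀ j, 0 ≤ μ j)
    (hν : ∀ k, 0 ≤ ν k) : (ν, 0) ∈ sndMarginalDrift y '' fstMarginalPlans μ := by
  classical
  by_contra hnot
  obtain ⟨f, u, hfν, hfK⟩ := geometric_hahn_banach_point_closed
    ((convex_fstMarginalPlans μ).linear_image (sndMarginalDrift y))
    ((isCompact_fstMarginalPlans μ).image
      (sndMarginalDrift y).continuous_of_finiteDimensional).isClosed hnot
  obtain ⟨ρ, hρ, hle⟩ := h.exists_mem_fstMarginalPlans_pairing_le hμ hν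
    (fun k => f (Pi.single k 1, 0)) (fun j => f (0, Pi.single j 1))
  have hdiag : sndMarginalDrift y (fun j k => if j = k then ν k else 0) = (ν, 0) := by
    ext <;> simp [sndMarginalDrift]
  have hfν_diag : f (ν, 0) = ∑ k, ν k * f (Pi.single k 1, 0) := by
    simpa [hdiag] using apply_sndMarginalDrift (y := y) f
      fun j k => if j = k then ν k else 0
  linarith [hfK _ ⟨ρ, hρ, rfl⟩, apply_sndMarginalDrift (y := y) f ρ]

theorem ConvexOrder.exists_martingale_coupling (h : ConvexOrder y μ ν) (hμ : ∀ j, 0 ≤ μ j)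
    (hν : ∀ k, 0 ≤ ν k) :
    ∃ ρ : ι → ι → ℝ, (∀ j k, 0 ≤ ρ j k) ∧ (∀ j, ∑ k, ρ j k = μ j) ∧
      (∀ k, ∑ j, ρ j k = ν k) ∧ ∀ j, ∑ k, (y k - y j) * ρ j k = 0 := by
  obtain ⟨ρ, ⟨hρ₀, hρμ⟩, hρν⟩ := h.mem_image_sndMarginalDrift hμ hν
  simp only [sndMarginalDrift, LinearMap.coe_mk, AddHom.coe_mk, Prod.mk.injEq, funext_iff] at hρν
  exact ⟨ρ, hρ₀, hρμ, hρν.1, hρν.2⟩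

end MartingaleCoupling

theorem finite_strassen_general (M : ℕ) (y : Fin M → ℝ)
    (μ ν : Fin M → ℝ)
    (hμ : ∀ j, 0 ≤ μ j) (hν : ∀ j, 0 ≤ ν j)
    (hcx : ∀ f : ℝ → ℝ, ConvexOn ℝ Set.univ f →
      ∑ j, μ j * f (y j) ≤ ∑ j, ν j * f (y j)) :
    ∃ ρ : Fin M → Fin M → ℝ,
      (∀ j k, 0 ≤ ρ j k) ∧
      (∀ j, ∑ k, ρ j k = μ j) ∧
      (∀ k, ∑ j, ρ j k = ν k) ∧
      (∀ j, 0 < μ j → ∑ k, (y k - y j) * ρ j k = 0) := by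
  obtain ⟨ρ, hρ₀, hρμ, hρν, hdrift⟩ := ConvexOrder.exists_martingale_coupling hcx hμ hν
  exact ⟨ρ, hρ₀, hρμ, hρν, fun j _ => hdrift j⟩

/-- Lemma 4.6 (finite Strassen): convex ordering implies the existence of a
martingale coupling. -/
theorem finite_strassen (M : ℕ) (hM : 1 ≤ M) (y : Fin M → ℝ) (hy : StrictMono y)
    (μ ν : Fin M → ℝ)
    (hμ : ∀ j, 0 ≤ μ j) (hν : ∀ j, 0 ≤ ν j)
    (hμ1 : ∑ j, μ j = 1) (hν1 : ∑ j, ν j = 1)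
    (hmean : ∑ j, μ j * y j = ∑ j, ν j * y j)
    (hcx : ∀ f : ℝ → ℝ, ConvexOn ℝ Set.univ f →
      ∑ j, μ j * f (y j) ≤ ∑ j, ν j * f (y j)) :
    ∃ ρ : Fin M → Fin M → ℝ,
      (∀ j k, 0 ≤ ρ j k) ∧
      (∀ j, ∑ k, ρ j k = μ j) ∧
      (∀ k, ∑ j, ρ j k = ν k) ∧
      (∀ j, 0 < μ j → ∑ k, (y k - y j) * ρ j k = 0) :=
  finite_strassen_general M y μ ν hμ hν hcx
end
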